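/- arXiv:2407.09630 — 6 statements merged into one kernel-verified Lean document; each statement's English description precedes it below -/
import Mathlib

section
/- The pair-splitting number 𝔰_pair is at most the subseries number ß. That is, if 𝓘 is a family of infinite sets of natural numbers such that for every conditionally convergent real series ∑ r_i there is I ∈ 𝓘 with ∑_{i ∈ I} r_i divergent, then 𝓘 has cardinality at least 𝔰_pair. -/
open Filter Cardinal

/-- Conditional convergence of a real series. -/
def CondConv (a : ℕ → ℝ) : Prop :=
  (∃ l : ℝ, Tendsto (fun N : ℕ => ∑ i ∈ Finset.range N, a i) atTop (nhds l)) ∧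
  ¬ Summable (fun i => |a i|)

/-- `A` is an unbounded set of pairs of natural numbers (pairs `p` with
`p.1 < p.2`, reaching arbitrarily high). -/
def UnboundedPairs (A : Set (ℕ × ℕ)) : Prop :=
  (∀ p ∈ A, p.1 < p.2) ∧ ∀ k : ℕ, ∃ p ∈ A, k ≤ p.1

/-- `X` pair-splits `A`: infinitely many pairs of `A` have exactly one
element in `X`. -/
def PairSplits (X : Set ℕ) (A : Set (ℕ × ℕ)) : Prop :=
  {p ∈ A | ¬ (p.1 ∈ X ↔ p.2 ∈ X)}.Infinite

/-- The pair-splitting number `𝔰_pair`. -/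
noncomputable def sPair : Cardinal :=
  sInf {c : Cardinal | ∃ F : Set (Set ℕ), (∀ X ∈ F, X.Infinite) ∧
    (∀ A : Set (ℕ × ℕ), UnboundedPairs A → ∃ X ∈ F, PairSplits X A) ∧ #F = c}

/-!
Given an unbounded set of pairs `A`, choose pairs `a k < b k < a (k + 1)` in `A` and put
`1 / (k + 1)` at `a k` and `-1 / (k + 1)` at `b k`. This series converges conditionally, and its
subseries along `I` still converges whenever `I` contains both or neither element of almost every
chosen pair. Hence a family witnessing `ß` pair-splits every unbounded set of pairs.
-/

open Finset Topology

/-- `pairSeries a b u v` has the term `u k` at position `a k` and `v k` at position `b k`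
(added up where positions coincide), and `0` elsewhere. -/
noncomputable def pairSeries (a b : ℕ → ℕ) (u v : ℕ → ℝ) (i : ℕ) : ℝ :=
  ∑ k ∈ range (i + 1), ((if a k = i then u k else 0) + (if b k = i then v k else 0))

def Interleaved (a b : ℕ → ℕ) : Prop :=
  ∀ k, a k < b k ∧ b k < a (k + 1)

theorem indicator_pairSeries (a b : ℕ → ℕ) (u v : ℕ → ℝ) (I : Set ℕ) :
    I.indicator (pairSeries a b u v) =
      pairSeries a b ((a ⁻¹' I).indicator u) ((b ⁻¹' I).indicator v) := by
  ext i
  by_cases hi : i ∈ I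
  · rw [Set.indicator_of_mem hi]
    refine sum_congr rfl fun k _ => ?_
    congr 1 <;> split_ifs with hk <;> simp_all
  · rw [Set.indicator_of_notMem hi]
    refine (sum_eq_zero fun k _ => ?_).symm
    split_ifs <;> simp_all

theorem sum_range_pairSeries {a b : ℕ → ℕ} (ha : StrictMono a) (hb : StrictMono b)
    (u v : ℕ → ℝ) (N : ℕ) :
    ∑ i ∈ range N, pairSeries a b u v i =
      ∑ k ∈ range N, ((if a k < N then u k else 0) + (if b k < N then v k else 0)) := by
  have hterm : ∀ i ∈ range N, pairSeries a b u v i =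
      ∑ k ∈ range N, ((if a k = i then u k else 0) + (if b k = i then v k else 0)) := by
    intro i hi
    refine sum_subset (range_subset_range.2 (mem_range.1 hi)) fun k _ hk => ?_
    have hik : i < k := by simpa using hk
    simp [(hik.trans_le (ha.id_le k)).ne', (hik.trans_le (hb.id_le k)).ne']
  rw [sum_congr rfl hterm, sum_comm]
  refine sum_congr rfl fun k _ => ?_
  simp only [Finset.sum_add_distrib, Finset.sum_ite_eq, mem_range]

namespace Interleaved

variable {a b : ℕ → ℕ} (h : Interleaved a b)
include h

theorem strictMono_left : StrictMono a :=
  strictMono_nat_of_lt_succ fun k => (h k).1.trans (h k).2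

theorem strictMono_right : StrictMono b :=
  strictMono_nat_of_lt_succ fun k => (h k).2.trans (h (k + 1)).1

theorem left_ne_right (k m : ℕ) : a k ≠ b m := by
  rcases le_or_gt k m with hkm | hmk
  · exact ((h.strictMono_left.monotone hkm).trans_lt (h m).1).ne
  · exact ((h m).2.trans_le (h.strictMono_left.monotone hmk)).ne'

theorem pairSeries_apply_left (u v : ℕ → ℝ) (n : ℕ) : pairSeries a b u v (a n) = u n := by
  rw [pairSeries, sum_eq_single n]
  · simp [(h.left_ne_right n n).symm]
  · intro k _ hkn
    simp [h.strictMono_left.injective.ne hkn, (h.left_ne_right n k).symm]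
  · exact fun hn => absurd (mem_range.2 (Nat.lt_succ_of_le (h.strictMono_left.id_le n))) hn

theorem exists_sum_range_pairSeries_eq (u v : ℕ → ℝ) (N : ℕ) :
    ∃ m, N ≤ b m ∧ ∑ i ∈ range N, pairSeries a b u v i =
      ∑ k ∈ range m, (u k + v k) + if a m < N then u m else 0 := by
  have hex : ∃ m, N ≤ b m := ⟨N, h.strictMono_right.id_le N⟩
  set m := Nat.find hex
  have hbm : N ≤ b m := Nat.find_spec hex
  have hmN : m ≤ N := Nat.find_min' hex (h.strictMono_right.id_le N)
  have hb_lt : ∀ k, b k < N ↔ k < m := fun k =>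
    ⟨fun hk => lt_of_not_ge fun hmk => (hbm.trans (h.strictMono_right.monotone hmk)).not_gt hk,
      fun hk => lt_of_not_ge (Nat.find_min hex hk)⟩
  have ha_lt : ∀ k, m < k → ¬ a k < N := fun k hk =>
    not_lt.2 (hbm.trans ((h m).2.le.trans (h.strictMono_left.monotone hk)))
  refine ⟨m, hbm, ?_⟩
  rw [sum_range_pairSeries h.strictMono_left h.strictMono_right, range_eq_Ico,
    ← sum_Ico_consecutive _ (Nat.zero_le m) hmN, ← range_eq_Ico]
  congr 1
  · refine sum_congr rfl fun k hk => ?_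
    have hkm : k < m := mem_range.1 hk
    rw [if_pos ((hb_lt k).2 hkm), if_pos ((h k).1.trans ((hb_lt k).2 hkm))]
  · rw [sum_eq_single m]
    · simp [hb_lt]
    · intro k hk hkm
      have hmk : m < k := lt_of_le_of_ne (mem_Ico.1 hk).1 (Ne.symm hkm)
      simp [ha_lt k hmk, (hb_lt k).not.2 (not_lt.2 hmk.le)]
    · intro hm
      have hNm : N ≤ m := by simpa [hmN] using hm
      simp [(hNm.trans (h.strictMono_left.id_le m)).not_gt, (hb_lt m).not.2 (lt_irrefl m)]

theorem tendsto_sum_range_pairSeries {u v : ℕ → ℝ} {L : ℝ}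
    (huv : Tendsto (fun n => ∑ k ∈ range n, (u k + v k)) atTop (𝓝 L))
    (hu : Tendsto u atTop (𝓝 0)) :
    Tendsto (fun N => ∑ i ∈ range N, pairSeries a b u v i) atTop (𝓝 L) := by
  choose m hbm hsum using h.exists_sum_range_pairSeries_eq u v
  have hm : Tendsto m atTop atTop := tendsto_atTop_atTop.2 fun M =>
    ⟨b M, fun N hN => h.strictMono_right.le_iff_le.1 (hN.trans (hbm N))⟩
  have hrest : Tendsto (fun N => if a (m N) < N then u (m N) else 0) atTop (𝓝 0) :=
    squeeze_zero_norm (fun N => show _ ≤ ‖u (m N)‖ by split_ifs <;> simp)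
      (by simpa using (hu.comp hm).norm)
  rw [← add_zero L]
  exact ((huv.comp hm).add hrest).congr fun N => (hsum N).symm

theorem condConv_pairSeries {w : ℕ → ℝ} (hw0 : Tendsto w atTop (𝓝 0)) (hw : ¬ Summable w) :
    CondConv (pairSeries a b w (-w)) := by
  refine ⟨⟨0, h.tendsto_sum_range_pairSeries (by simp) hw0⟩, fun habs => hw ?_⟩
  have hcomp := habs.comp_injective h.strictMono_left.injective
  simp only [Function.comp_def, h.pairSeries_apply_left] at hcomp
  exact summable_abs_iff.1 hcomp

theorem exists_tendsto_sum_indicator_pairSeries {u : ℕ → ℝ} (hu : Tendsto u atTop (𝓝 0))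
    {I : Set ℕ} (hI : ∀ᶠ k in atTop, (a k ∈ I ↔ b k ∈ I)) :
    ∃ l, Tendsto (fun N => ∑ i ∈ range N, I.indicator (pairSeries a b u (-u)) i) atTop (𝓝 l) := by
  rw [indicator_pairSeries]
  obtain ⟨M, hM⟩ := eventually_atTop.1 hI
  have hsummable : Summable fun k => (a ⁻¹' I).indicator u k + (b ⁻¹' I).indicator (-u) k := by
    refine summable_of_hasFiniteSupport ((Set.finite_Iio M).subset fun k hk => ?_)
    by_contra hkM
    have hiff := hM k (not_lt.1 hkM)
    by_cases hak : a k ∈ I <;> simp_all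
  refine ⟨_, h.tendsto_sum_range_pairSeries hsummable.tendsto_sum_tsum_nat ?_⟩
  exact squeeze_zero_norm (fun k => norm_indicator_le_norm_self _ _) (by simpa using hu.norm)

end Interleaved

theorem UnboundedPairs.exists_interleaved {A : Set (ℕ × ℕ)} (hA : UnboundedPairs A) :
    ∃ a b : ℕ → ℕ, Interleaved a b ∧ ∀ k, (a k, b k) ∈ A := by
  choose g hgA hg using hA.2
  let p : ℕ → ℕ × ℕ := fun n => Nat.rec (g 0) (fun _ q => g (q.2 + 1)) n
  have hpA : ∀ n, p n ∈ A := fun n => by cases n <;> exact hgA _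
  refine ⟨fun n => (p n).1, fun n => (p n).2, fun n => ⟨hA.1 _ (hpA n), hg ((p n).2 + 1)⟩, hpA⟩

theorem eventually_mem_iff_of_not_pairSplits {A : Set (ℕ × ℕ)} {X : Set ℕ} {a b : ℕ → ℕ}
    (ha : a.Injective) (hmem : ∀ k, (a k, b k) ∈ A) (hX : ¬ PairSplits X A) :
    ∀ᶠ k in atTop, (a k ∈ X ↔ b k ∈ X) := by
  have hfin := (Set.not_infinite.1 hX).preimage (f := fun k => (a k, b k))
    fun k _ m _ hkm => ha (congrArg Prod.fst hkm)
  rw [← Nat.cofinite_eq_atTop]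
  filter_upwards [hfin.eventually_cofinite_notMem] with k hk
  by_contra hne
  exact hk ⟨hmem k, hne⟩

theorem not_summable_one_div_nat_add_one : ¬ Summable fun n : ℕ => 1 / ((n : ℝ) + 1) := by
  have h := (summable_nat_add_iff 1).not.2 Real.not_summable_one_div_natCast
  exact_mod_cast h

/-- `𝔰_pair ≤ ß`; i.e. any family `𝓘` of infinite sets of
naturals such that every conditionally convergent series has a divergent
subseries indexed by a member of `𝓘` has cardinality at least `𝔰_pair`. -/
theorem sPair_le_ss (𝓘 : Set (Set ℕ)) (hinf : ∀ I ∈ 𝓘, I.Infinite)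
    (hss : ∀ r : ℕ → ℝ, CondConv r → ∃ I ∈ 𝓘, ¬ ∃ l : ℝ,
      Tendsto (fun N : ℕ => ∑ i ∈ Finset.range N, Set.indicator I r i)
        atTop (nhds l)) :
    sPair ≤ #𝓘 := by
  refine csInf_le' ⟨𝓘, hinf, fun A hA => ?_, rfl⟩
  obtain ⟨a, b, hab, hmem⟩ := hA.exists_interleaved
  have hw0 := tendsto_one_div_add_atTop_nhds_zero_nat (𝕜 := ℝ)
  obtain ⟨I, hI, hdiv⟩ := hss _ (hab.condConv_pairSeries hw0 not_summable_one_div_nat_add_one)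
  refine ⟨I, hI, by_contra fun hsplit => hdiv ?_⟩
  exact hab.exists_tendsto_sum_indicator_pairSeries hw0
    (eventually_mem_iff_of_not_pairSplits hab.strictMono_left.injective hmem hsplit)
end

section
/- The unbounded evasion number 𝔢_ubd is at most the pair-splitting number 𝔰_pair. -/
open Filter Cardinal

/-- The predictor `(D, π)` predicts the sequence `s`: for all but finitely
many `n ∈ D`, `π n (s ↾ n) = s n`. -/
def Predicts (D : Set ℕ) (π : (n : ℕ) → (Fin n → ℕ) → ℕ) (s : ℕ → ℕ) : Prop :=
  {n ∈ D | π n (fun i => s i) ≠ s n}.Finite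

/-- The unbounded evasion number `𝔢_ubd`: the minimum over all
`f : ω → ω \ 2` of the least size of a family `E ⊆ ∏ n, f n` not predicted
by any single predictor. -/
noncomputable def eUbd : Cardinal :=
  sInf {c : Cardinal | ∃ f : ℕ → ℕ, (∀ n, 2 ≤ f n) ∧ ∃ E : Set (ℕ → ℕ),
    (∀ s ∈ E, ∀ n, s n < f n) ∧
    (∀ (D : Set ℕ) (π : (n : ℕ) → (Fin n → ℕ) → ℕ), D.Infinite →
      ∃ s ∈ E, ¬ Predicts D π s) ∧ #E = c}

/-! Cut `ℕ` into consecutive blocks, block `n` of length `L n` starting at `blockStart L n`, and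
code a set `X` by the sequence whose `n`-th value is the binary number with bits `X ∩ block n`.
Such codes have `2 ^ blockStart L n` possible histories of length `n`, so once
`2 ^ 2 ^ blockStart L n < L n`, pigeonhole gives two positions of block `n` where the bits of a
predictor's guess agree whatever the history. Any `X` pair-splitting the unbounded set of these
pairs (over `n ∈ D`) makes the guess wrong infinitely often, so the codes of a pair-splitting
family form an unpredictable family. -/

open Finset

theorem Nat.testBit_sum_two_pow (s : Finset ℕ) (i : ℕ) :
    (∑ j ∈ s, 2 ^ j).testBit i = decide (i ∈ s) := by
  rw [Bool.eq_iff_iff, decide_eq_true_iff, ← Nat.mem_bitIndices, ← List.mem_toFinset,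
    toFinset_bitIndices_sum_two_pow]

theorem Nat.exists_testBit_eq_of_two_pow_card_lt {H : Type*} [Fintype H] (g : H → ℕ) {L : ℕ}
    (hL : 2 ^ Fintype.card H < L) :
    ∃ a b, a < b ∧ b < L ∧ ∀ h, (g h).testBit a = (g h).testBit b := by
  classical
  have hcard : Fintype.card (H → Bool) < Fintype.card (Fin L) := by simpa using hL
  obtain ⟨a, b, hab, hbits⟩ :=
    Fintype.exists_ne_map_eq_of_card_lt (fun (a : Fin L) h => (g h).testBit a) hcard
  rcases Fin.lt_or_lt_of_ne hab with hlt | hlt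
  · exact ⟨a, b, hlt, b.isLt, fun h => congrFun hbits h⟩
  · exact ⟨b, a, hlt, a.isLt, fun h => (congrFun hbits h).symm⟩

section Blocks

variable (L : ℕ → ℕ)

def blockStart (n : ℕ) : ℕ := ∑ i ∈ range n, L i

open Classical in
noncomputable def blockCode (X : Set ℕ) (n : ℕ) : ℕ :=
  ∑ i ∈ (range (L n)).filter (blockStart L n + · ∈ X), 2 ^ i

variable {L}

theorem blockStart_succ (n : ℕ) : blockStart L (n + 1) = blockStart L n + L n :=
  sum_range_succ L n

theorem blockCode_lt_two_pow (X : Set ℕ) (n : ℕ) : blockCode L X n < 2 ^ L n := by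
  classical
  exact Nat.geomSum_lt le_rfl fun _ hi => mem_range.mp (mem_filter.mp hi).1

theorem testBit_blockCode (X : Set ℕ) {n i : ℕ} (hi : i < L n) :
    (blockCode L X n).testBit i = true ↔ blockStart L n + i ∈ X := by
  simp [blockCode, Nat.testBit_sum_two_pow, hi]

theorem le_blockStart (hL : ∀ n, 1 ≤ L n) (n : ℕ) : n ≤ blockStart L n := by
  simpa [blockStart] using card_nsmul_le_sum (range n) L 1 fun i _ => hL i

theorem prod_two_pow_eq_two_pow_blockStart (n : ℕ) :
    ∏ i : Fin n, 2 ^ L i = 2 ^ blockStart L n := by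
  rw [Fin.prod_univ_eq_prod_range (fun i => 2 ^ L i), prod_pow_eq_pow_sum, blockStart]

theorem ne_blockCode_of_testBit_eq {X : Set ℕ} {n a b m : ℕ} (ha : a < L n) (hb : b < L n)
    (hm : m.testBit a = m.testBit b)
    (hX : ¬(blockStart L n + a ∈ X ↔ blockStart L n + b ∈ X)) : m ≠ blockCode L X n := by
  rintro rfl
  rw [← testBit_blockCode X ha, ← testBit_blockCode X hb, hm] at hX
  exact hX Iff.rfl

theorem exists_unboundedPairs_not_predicts_blockCode (hL : ∀ n, 2 ^ 2 ^ blockStart L n < L n)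
    {D : Set ℕ} (hD : D.Infinite) (π : (n : ℕ) → (Fin n → ℕ) → ℕ) :
    ∃ A, UnboundedPairs A ∧ ∀ X, PairSplits X A → ¬Predicts D π (blockCode L X) := by
  have hpair (n : ℕ) : ∃ a b, a < b ∧ b < L n ∧ ∀ h : (i : Fin n) → Fin (2 ^ L i),
      (π n fun i => h i).testBit a = (π n fun i => h i).testBit b :=
    Nat.exists_testBit_eq_of_two_pow_card_lt _ <| by
      simpa [prod_two_pow_eq_two_pow_blockStart] using hL n
  choose a b hab hbL hbits using hpair
  let pair (n : ℕ) : ℕ × ℕ := (blockStart L n + a n, blockStart L n + b n)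
  refine ⟨pair '' D, ⟨?_, fun k => ?_⟩, fun X hX hpred => ?_⟩
  · rintro _ ⟨n, -, rfl⟩
    exact Nat.add_lt_add_left (hab n) _
  · obtain ⟨n, hnD, hkn⟩ := hD.exists_gt k
    have hpos (i : ℕ) : 1 ≤ L i := Nat.one_le_two_pow.trans (hL i).le
    exact ⟨pair n, Set.mem_image_of_mem _ hnD,
      hkn.le.trans ((le_blockStart hpos n).trans (Nat.le_add_right _ _))⟩
  · refine hX ((hpred.image pair).subset ?_)
    rintro _ ⟨⟨n, hnD, rfl⟩, hsplit⟩
    exact ⟨n, ⟨hnD, ne_blockCode_of_testBit_eq ((hab n).trans (hbL n)) (hbL n)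
      (hbits n fun i => ⟨_, blockCode_lt_two_pow X i⟩) hsplit⟩, rfl⟩

end Blocks

theorem exists_two_pow_two_pow_blockStart_lt :
    ∃ L : ℕ → ℕ, ∀ n, 2 ^ 2 ^ blockStart L n < L n := by
  let next (t : ℕ) : ℕ := t + (2 ^ 2 ^ t + 1)
  let L (n : ℕ) : ℕ := 2 ^ 2 ^ next^[n] 0 + 1
  have hstart (n : ℕ) : blockStart L n = next^[n] 0 := by
    induction n with
    | zero => rfl
    | succ n ih => rw [blockStart_succ, ih, Function.iterate_succ_apply']
  exact ⟨L, fun n => by rw [hstart]; exact Nat.lt_succ_self _⟩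

theorem eUbd_le_mk_of_forall_pairSplits {F : Set (Set ℕ)}
    (hF : ∀ A, UnboundedPairs A → ∃ X ∈ F, PairSplits X A) : eUbd ≤ #F := by
  obtain ⟨L, hL⟩ := exists_two_pow_two_pow_blockStart_lt
  have hevades (D : Set ℕ) (π : (n : ℕ) → (Fin n → ℕ) → ℕ) (hD : D.Infinite) :
      ∃ s ∈ blockCode L '' F, ¬Predicts D π s := by
    obtain ⟨A, hA, hsplit⟩ := exists_unboundedPairs_not_predicts_blockCode hL hD π
    obtain ⟨X, hXF, hXA⟩ := hF A hA
    exact ⟨_, Set.mem_image_of_mem _ hXF, hsplit X hXA⟩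
  have hbound : ∀ s ∈ blockCode L '' F, ∀ n, s n < 2 ^ L n := by
    rintro _ ⟨X, -, rfl⟩ n
    exact blockCode_lt_two_pow X n
  have htwo (n : ℕ) : 2 ≤ 2 ^ L n :=
    Nat.one_lt_two_pow (Nat.zero_lt_of_lt (hL n)).ne'
  calc eUbd ≤ #(blockCode L '' F) := csInf_le' ⟨_, htwo, _, hbound, hevades, rfl⟩
    _ ≤ #F := mk_image_le

theorem PairSplits.mono {X : Set ℕ} {A B : Set (ℕ × ℕ)} (h : PairSplits X A) (hAB : A ⊆ B) :
    PairSplits X B :=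
  Set.Infinite.mono (fun _ hp => ⟨hAB hp.1, hp.2⟩) h

theorem exists_infinite_pairSplits_range {u : ℕ → ℕ × ℕ}
    (hu : ∀ k, (u k).1 < (u k).2 ∧ (u k).2 < (u (k + 1)).1) :
    ∃ X : Set ℕ, X.Infinite ∧ PairSplits X (Set.range u) := by
  have hmono : StrictMono fun k => (u k).1 :=
    strictMono_nat_of_lt_succ fun k => (hu k).1.trans (hu k).2
  have hsnd (k : ℕ) : (u k).2 ∉ Set.range fun k => (u k).1 := by
    rintro ⟨j, hj : (u j).1 = (u k).2⟩
    rcases le_or_gt j k with hjk | hkj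
    · have := hmono.monotone hjk
      have := (hu k).1
      omega
    · have := hmono.monotone (show k + 1 ≤ j from hkj)
      have := (hu k).2
      omega
  have hinj : u.Injective := fun j k h => hmono.injective (congrArg Prod.fst h)
  refine ⟨_, Set.infinite_range_of_injective hmono.injective,
    Set.Infinite.mono ?_ (Set.infinite_range_of_injective hinj)⟩
  rintro _ ⟨k, rfl⟩
  exact ⟨⟨k, rfl⟩, fun hiff => hsnd k (hiff.mp ⟨k, rfl⟩)⟩

theorem UnboundedPairs.exists_infinite_pairSplits {A : Set (ℕ × ℕ)} (hA : UnboundedPairs A) :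
    ∃ X : Set ℕ, X.Infinite ∧ PairSplits X A := by
  choose p hpA hp using hA.2
  let u (k : ℕ) : ℕ × ℕ := (fun q => p (q.2 + 1))^[k] (p 0)
  have huA (k : ℕ) : u k ∈ A := by
    cases k with
    | zero => exact hpA 0
    | succ k => simp only [u, Function.iterate_succ_apply']; exact hpA _
  have hu (k : ℕ) : (u k).1 < (u k).2 ∧ (u k).2 < (u (k + 1)).1 := by
    refine ⟨hA.1 _ (huA k), ?_⟩
    simp only [u, Function.iterate_succ_apply']
    exact Nat.lt_of_succ_le (hp _)
  obtain ⟨X, hX, hsplit⟩ := exists_infinite_pairSplits_range hu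
  exact ⟨X, hX, hsplit.mono (Set.range_subset_iff.mpr huA)⟩

/-- `𝔢_ubd ≤ 𝔰_pair`. -/
theorem eUbd_le_sPair : eUbd ≤ sPair :=
  le_csInf ⟨_, {X | X.Infinite}, fun _ hX => hX,
      fun _ hA => hA.exists_infinite_pairSplits, rfl⟩
    (by rintro _ ⟨F, -, hF, rfl⟩; exact eUbd_le_mk_of_forall_pairSplits hF)
end

section
/- The partition splitting number 𝔰(𝔭𝔯) is at most the uniformity of the meagre ideal, non(ℳ). -/
open Filter Cardinal

/-- `P` is a partition of ℕ into infinitely many (nonempty, pairwise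
disjoint) pieces. -/
def IsInfPartition (P : Set (Set ℕ)) : Prop :=
  P.Infinite ∧ (∀ x ∈ P, x ≠ ∅) ∧
  (∀ x ∈ P, ∀ y ∈ P, x ≠ y → Disjoint x y) ∧ ⋃₀ P = Set.univ

/-- The partition `P` splits `a`: `a ∩ x` is infinite for every piece
`x ∈ P`. -/
def PartSplits (P : Set (Set ℕ)) (a : Set ℕ) : Prop :=
  ∀ x ∈ P, (a ∩ x).Infinite

/-- The partition splitting number `𝔰(𝔭𝔯)`. -/
noncomputable def sPr : Cardinal :=
  sInf {c : Cardinal | ∃ F : Set (Set (Set ℕ)), (∀ P ∈ F, IsInfPartition P) ∧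
    (∀ a : Set ℕ, a.Infinite → ∃ P ∈ F, PartSplits P a) ∧ #F = c}

/-- `non(ℳ)`: the least cardinality of a non-meagre set of reals. -/
noncomputable def nonMeagre : Cardinal :=
  sInf {c : Cardinal | ∃ S : Set ℝ, ¬ IsMeagre S ∧ #S = c}

namespace SPr

/-- The digit function: `ff r n = ⌊r·(n+1)!⌋ mod (n+1)` as a natural number `≤ n`. -/
noncomputable def ff (r : ℝ) (n : ℕ) : ℕ :=
  (⌊r * (Nat.factorial (n+1) : ℝ)⌋ % ((n : ℤ) + 1)).toNat

/-- the `j`-th fiber of `ff r`. -/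
def fib (r : ℝ) (j : ℕ) : Set ℕ := {n | ff r n = j}

/-- the partition coded by `r`. -/
def phi (r : ℝ) : Set (Set ℕ) := {x | ∃ j, x = fib r j ∧ (fib r j).Nonempty}

/-- "bad" building block: no `n ∈ a` beyond `m` lands in fiber `j`. -/
def C (a : Set ℕ) (j m : ℕ) : Set ℝ := {r | ∀ n ∈ a, m ≤ n → ff r n ≠ j}

def bad (a : Set ℕ) : Set ℝ := ⋃ j, ⋃ m, C a j m

lemma fact_big : ∀ n : ℕ, 4 ≤ n → n * (n+3) ≤ Nat.factorial (n+1) := by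
  intro n hn
  induction n with
  | zero => omega
  | succ k ih =>
    rcases Nat.lt_or_ge k 4 with hk | hk
    · interval_cases k <;> simp_all <;> decide
    · have := ih (by omega)
      have h2 : Nat.factorial (k+2) = (k+2) * Nat.factorial (k+1) := rfl
      nlinarith [this, Nat.factorial_pos (k+1)]

/-- Core forcing lemma: inside any interval we can force `ff r n = j`. -/
lemma exists_forcing (u v : ℝ) (huv : u < v) (n j : ℕ) (hj : j ≤ n)
    (hbig : (n + 3 : ℝ) < (v - u) * (Nat.factorial (n+1) : ℝ)) :
    ∃ u' v' : ℝ, u < u' ∧ u' < v' ∧ v' < v ∧ ∀ r ∈ Set.Ioo u' v', ff r n = j := by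
  set L : ℝ := (Nat.factorial (n+1) : ℝ) with hL
  have hLpos : (0:ℝ) < L := by positivity
  set k0 : ℤ := ⌈u * L⌉ with hk0
  set k : ℤ := k0 + 1 + (j - (k0+1)) % ((n : ℤ) + 1) with hk
  have hn1 : (0:ℤ) < (n : ℤ) + 1 := by positivity
  have hmod0 : (0:ℤ) ≤ (j - (k0+1)) % ((n : ℤ) + 1) := Int.emod_nonneg _ (by omega)
  have hmod1 : (j - (k0+1)) % ((n : ℤ) + 1) < (n : ℤ) + 1 := Int.emod_lt_of_pos _ hn1
  have hkmod : k % ((n : ℤ) + 1) = (j : ℤ) := by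
    have : k % ((n:ℤ)+1) = ((k0+1) + (j - (k0+1))) % ((n:ℤ)+1) := by
      rw [hk, Int.add_emod, Int.emod_emod_of_dvd _ dvd_rfl, ← Int.add_emod]
    rw [this]
    have : (k0+1) + ((j:ℤ) - (k0+1)) = (j:ℤ) := by ring
    rw [this, Int.emod_eq_of_lt (by positivity) (by exact_mod_cast by omega)]
  have hk1 : k0 + 1 ≤ k := by omega
  have hk2 : k ≤ k0 + 1 + n := by omega
  have hc1 : u * L ≤ (k0:ℝ) := Int.le_ceil (u * L)
  have hc2 : (k0 : ℝ) < u * L + 1 := Int.ceil_lt_add_one (u*L)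
  have hr1 : (k0:ℝ) + 1 ≤ (k:ℝ) := by exact_mod_cast hk1
  have hr2 : (k:ℝ) ≤ (k0:ℝ) + 1 + n := by exact_mod_cast hk2
  have hklb : u * L < k := by linarith
  have hkub : (k:ℝ) + 1 < v * L := by nlinarith
  refine ⟨(k:ℝ)/L, ((k:ℝ)+1)/L, ?_, ?_, ?_, ?_⟩
  · exact (lt_div_iff₀ hLpos).mpr (by linarith)
  · gcongr
    linarith
  · exact (div_lt_iff₀ hLpos).mpr (by linarith)
  · rintro r ⟨hx1, hx2⟩
    rw [div_lt_iff₀ hLpos] at hx1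
    rw [lt_div_iff₀ hLpos] at hx2
    have hfl : ⌊r * L⌋ = k := by
      rw [Int.floor_eq_iff]
      exact ⟨by linarith, by push_cast; linarith⟩
    unfold ff
    rw [← hL, hfl, hkmod]
    simp


/-- Find a suitable large `n` in an infinite set. -/
lemma exists_good_n {a : Set ℕ} (ha : a.Infinite) (u v : ℝ) (huv : u < v) (m j : ℕ) :
    ∃ n ∈ a, m ≤ n ∧ j ≤ n ∧ (n + 3 : ℝ) < (v - u) * (Nat.factorial (n+1) : ℝ) := by
  obtain ⟨t, ht⟩ := exists_nat_gt (1 / (v - u))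
  obtain ⟨n, hna, hn⟩ := ha.exists_gt (max (max m j) (max 4 t))
  have h4 : 4 ≤ n := by omega
  have hfact := fact_big n h4
  have hfr : (n : ℝ) * (n + 3) ≤ (Nat.factorial (n+1) : ℝ) := by exact_mod_cast hfact
  have hvu : (0:ℝ) < v - u := by linarith
  have htn : 1 / (v - u) < (n : ℝ) := by
    have : (t:ℝ) ≤ n := by exact_mod_cast (by omega : t ≤ n)
    linarith
  have h1 : 1 < (v - u) * n := by
    rw [div_lt_iff₀ hvu] at htn; linarith [htn]
  refine ⟨n, hna, by omega, by omega, ?_⟩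
  have hn3 : (0:ℝ) < (n:ℝ) + 3 := by positivity
  nlinarith

lemma nowhereDense_C {a : Set ℕ} (ha : a.Infinite) (j m : ℕ) : IsNowhereDense (C a j m) := by
  rw [IsNowhereDense, Set.eq_empty_iff_forall_notMem]
  intro x hx
  rw [mem_interior_iff_mem_nhds, Metric.mem_nhds_iff] at hx
  obtain ⟨ε, hε, hball⟩ := hx
  have huv : x - ε < x + ε := by linarith
  obtain ⟨n, hna, hmn, hjn, hbig⟩ := exists_good_n ha (x - ε) (x + ε) huv m j
  obtain ⟨u', v', h1, h2, h3, hforce⟩ := exists_forcing (x - ε) (x + ε) huv n j hjn hbig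
  have hw : (u' + v') / 2 ∈ Set.Ioo u' v' := ⟨by linarith, by linarith⟩
  have hwball : (u' + v') / 2 ∈ Metric.ball x ε := by
    rw [Real.ball_eq_Ioo]
    exact ⟨by simp only [Set.mem_Ioo] at hw ⊢; linarith, by linarith [hw.1, hw.2]⟩
  have hwcl : (u' + v') / 2 ∈ closure (C a j m) := hball hwball
  rw [mem_closure_iff] at hwcl
  obtain ⟨y, hy, hyC⟩ := hwcl (Set.Ioo u' v') isOpen_Ioo hw
  exact hyC n hna hmn (hforce y hy)

lemma isMeagre_of_nowhereDense {s : Set ℝ} (h : IsNowhereDense s) : IsMeagre s := by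
  rw [isMeagre_iff_countable_union_isNowhereDense]
  exact ⟨{s}, by simpa, Set.countable_singleton _, by simp⟩

lemma meagre_bad {a : Set ℕ} (ha : a.Infinite) : IsMeagre (bad a) := by
  unfold bad
  exact isMeagre_iUnion fun j => isMeagre_iUnion fun m =>
    isMeagre_of_nowhereDense (nowhereDense_C ha j m)

lemma good_fib {a : Set ℕ} {r : ℝ} (hr : r ∉ bad a) (j : ℕ) : (a ∩ fib r j).Infinite := by
  by_contra hfin
  rw [Set.not_infinite] at hfin
  obtain ⟨m, hm⟩ := hfin.bddAbove
  apply hr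
  refine Set.mem_iUnion.mpr ⟨j, Set.mem_iUnion.mpr ⟨m + 1, ?_⟩⟩
  intro n hna hmn hne
  have : n ∈ a ∩ fib r j := ⟨hna, hne⟩
  have := hm this
  omega

lemma splits_phi {a : Set ℕ} {r : ℝ} (hr : r ∉ bad a) : PartSplits (phi r) a := by
  rintro x ⟨j, rfl, -⟩
  exact good_fib hr j

lemma isInfPartition_phi {r : ℝ} (hr : r ∉ bad Set.univ) : IsInfPartition (phi r) := by
  have hfibinf : ∀ j, (fib r j).Infinite := by
    intro j
    have := good_fib hr j
    rwa [Set.univ_inter] at this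
  have hinj : Function.Injective (fib r) := by
    intro j j' h
    obtain ⟨n, hn⟩ := (hfibinf j).nonempty
    have hn' : n ∈ fib r j' := h ▸ hn
    exact hn.symm.trans hn'
  refine ⟨?_, ?_, ?_, ?_⟩
  · have : phi r = Set.range (fib r) := by
      ext x
      constructor
      · rintro ⟨j, rfl, -⟩; exact ⟨j, rfl⟩
      · rintro ⟨j, rfl⟩; exact ⟨j, rfl, (hfibinf j).nonempty⟩
    rw [this]
    exact Set.infinite_range_of_injective hinj
  · rintro x ⟨j, rfl, -⟩
    exact (hfibinf j).nonempty.ne_empty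
  · rintro x ⟨j, rfl, -⟩ y ⟨j', rfl, -⟩ hxy
    rw [Set.disjoint_left]
    rintro n hn hn'
    exact hxy (congrArg (fib r) (hn.symm.trans hn' : (j:ℕ) = j'))
  · rw [Set.eq_univ_iff_forall]
    intro n
    exact ⟨fib r (ff r n), ⟨ff r n, rfl, ⟨n, rfl⟩⟩, rfl⟩

lemma not_isMeagre_univ : ¬ IsMeagre (Set.univ : Set ℝ) := by
  intro h
  rw [IsMeagre, Set.compl_univ] at h
  have := (dense_of_mem_residual h).nonempty
  simp at this

end SPr

/-- `𝔰(𝔭𝔯) ≤ non(ℳ)`. -/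
theorem sPr_le_nonMeagre : sPr ≤ nonMeagre := by
  apply le_csInf
  · exact ⟨#(Set.univ : Set ℝ), Set.univ, SPr.not_isMeagre_univ, rfl⟩
  rintro c ⟨S, hS, rfl⟩
  set S' : Set ℝ := S \ SPr.bad Set.univ with hS'
  set F : Set (Set (Set ℕ)) := SPr.phi '' S' with hF
  have h1 : ∀ P ∈ F, IsInfPartition P := by
    rintro P ⟨r, hr, rfl⟩
    exact SPr.isInfPartition_phi hr.2
  have h2 : ∀ a : Set ℕ, a.Infinite → ∃ P ∈ F, PartSplits P a := by
    intro a ha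
    have hme : IsMeagre (SPr.bad a ∪ SPr.bad Set.univ) := by
      rw [IsMeagre, Set.compl_union]
      exact Filter.inter_mem (SPr.meagre_bad ha) (SPr.meagre_bad Set.infinite_univ)
    have : ¬ S ⊆ SPr.bad a ∪ SPr.bad Set.univ := fun hsub => hS (hme.mono hsub)
    obtain ⟨r, hrS, hrn⟩ := Set.not_subset.mp this
    rw [Set.mem_union, not_or] at hrn
    exact ⟨SPr.phi r, ⟨r, ⟨hrS, hrn.2⟩, rfl⟩, SPr.splits_phi hrn.1⟩
  have hle : sPr ≤ #F := csInf_le (OrderBot.bddBelow _) ⟨F, h1, h2, rfl⟩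
  refine hle.trans ((Cardinal.mk_image_le).trans ?_)
  exact Cardinal.mk_le_mk_of_subset Set.diff_subset
end

section
/- min(𝔟, 𝔯_{1/2}) ≤ ß: the minimum of the unbounding number and the unbisecting number is at most the subseries number. -/
open Filter Cardinal

/-- The unbounding number `𝔟`. -/
noncomputable def frakB : Cardinal :=
  sInf {c : Cardinal | ∃ F : Set (ℕ → ℕ),
    (¬ ∃ g : ℕ → ℕ, ∀ f ∈ F, ∀ᶠ n in atTop, f n ≤ g n) ∧ #F = c}

/-- `S` bisects `X`: the relative density of `S` in `X` tends to `1/2`. -/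
def Bisects (S X : Set ℕ) : Prop :=
  Tendsto (fun n : ℕ =>
      ((S ∩ X ∩ Set.Iio n).ncard : ℝ) / ((X ∩ Set.Iio n).ncard))
    atTop (nhds (1 / 2))

/-- The unbisecting number `𝔯_{1/2}`: the least size of a family of infinite
sets of naturals not simultaneously bisected by any single set. -/
noncomputable def rHalf : Cardinal :=
  sInf {c : Cardinal | ∃ F : Set (Set ℕ), (∀ X ∈ F, X.Infinite) ∧
    (¬ ∃ S : Set ℕ, ∀ X ∈ F, Bisects S X) ∧ #F = c}

/-- The subseries number `ß`. -/
noncomputable def ssNum : Cardinal :=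
  sInf {c : Cardinal | ∃ 𝓘 : Set (Set ℕ),
    (∀ r : ℕ → ℝ, CondConv r → ∃ I ∈ 𝓘, ¬ ∃ l : ℝ,
      Tendsto (fun N : ℕ => ∑ i ∈ Finset.range N, Set.indicator I r i)
        atTop (nhds l)) ∧ #𝓘 = c}

/-!
Let `𝓘` have fewer than `min 𝔟 𝔯_{1/2}` members. Some `S` bisects `ℕ` and every infinite
`I ∈ 𝓘` (finitely many infinite sets are bisected by alternating inside each atom of the
Boolean algebra they generate), so the discrepancy `Σ_{i < n, i ∈ I} (±1)` of `S` on `I` is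
`o(n)`. The rates of these `o(n)` bounds are fewer than `𝔟`, hence dominated by one `g`. With
blocks `[φ k, φ (k + 1))`, `φ ≥ g`, `φ (k + 1) ≥ 2 φ k`, put `±1 / φ (k + 1)` (sign given by `S`)
on block `k`: each block carries absolute mass `≥ 1/2`, so the series is not absolutely
convergent, but along every `I ∈ 𝓘` its partial sums move by `O(2⁻ᵏ)` inside block `k`, so all
these subseries (and the series itself) converge, and `𝓘` does not witness `ß`.
-/

namespace SubseriesNumber

open Finset Asymptotics Topology

open scoped Classical in
noncomputable def sgn (S : Set ℕ) (i : ℕ) : ℝ := if i ∈ S then 1 else -1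

lemma abs_sgn (S : Set ℕ) (i : ℕ) : |sgn S i| = 1 := by
  by_cases h : i ∈ S <;> simp [sgn, h]

noncomputable def discrepancy (S X : Set ℕ) (n : ℕ) : ℝ :=
  ∑ i ∈ range n, X.indicator (sgn S) i

open scoped Classical in
lemma inter_Iio_eq_filter (X : Set ℕ) (n : ℕ) : X ∩ Set.Iio n = ↑((range n).filter (· ∈ X)) := by
  ext; simp [and_comm]

lemma ncard_inter_Iio (X : Set ℕ) (n : ℕ) :
    ((X ∩ Set.Iio n).ncard : ℝ) = ∑ i ∈ range n, X.indicator 1 i := by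
  classical
  rw [inter_Iio_eq_filter, Set.ncard_coe_finset, natCast_card_filter]
  simp [Set.indicator_apply]

lemma tendsto_ncard_inter_Iio {X : Set ℕ} (hX : X.Infinite) :
    Tendsto (fun n => (X ∩ Set.Iio n).ncard) atTop atTop := by
  classical
  have hcount : ∀ n, (X ∩ Set.Iio n).ncard = Nat.count (· ∈ X) n := fun n => by
    rw [inter_Iio_eq_filter, Set.ncard_coe_finset, Nat.count_eq_card_filter_range]
  simp only [hcount]
  exact tendsto_atTop_atTop_of_monotone (Nat.count_monotone _)
    fun K => ⟨Nat.nth (· ∈ X) K, (Nat.count_nth_of_infinite (p := (· ∈ X)) hX K).ge⟩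

lemma discrepancy_eq (S X : Set ℕ) (n : ℕ) :
    discrepancy S X n = 2 * (S ∩ X ∩ Set.Iio n).ncard - (X ∩ Set.Iio n).ncard := by
  classical
  rw [ncard_inter_Iio, ncard_inter_Iio, mul_sum, ← sum_sub_distrib, discrepancy]
  refine sum_congr rfl fun i _ => ?_
  by_cases hX : i ∈ X <;> by_cases hS : i ∈ S <;> simp [sgn, hX, hS]
  norm_num

lemma Bisects.discrepancy_isLittleO {S X : Set ℕ} (h : Bisects S X) :
    discrepancy S X =o[atTop] (fun n => (n : ℝ)) := by
  refine IsLittleO.of_bound fun c hc => ?_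
  filter_upwards [Metric.tendsto_nhds.mp h (min (c / 2) (1 / 2)) (by positivity)] with n hn
  set t : ℝ := ((X ∩ Set.Iio n).ncard : ℝ)
  set d : ℝ := ((S ∩ X ∩ Set.Iio n).ncard : ℝ)
  rw [Real.dist_eq, lt_min_iff] at hn
  -- a zero denominator would put the ratio at `0`, at distance `1/2` from `1/2`
  have ht : 0 < t := by
    rcases (show (0 : ℝ) ≤ t by positivity).eq_or_lt with h0 | h0
    · rw [← h0, div_zero] at hn
      norm_num at hn
    · exact h0
  have htn : t ≤ n := by
    simpa [t] using Set.ncard_inter_le_ncard_right X (Set.Iio n) (Set.finite_Iio n)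
  have hdisc : discrepancy S X n = 2 * t * (d / t - 1 / 2) := by
    rw [discrepancy_eq]; field_simp; ring
  rw [hdisc, Real.norm_eq_abs, Real.norm_natCast, abs_mul, abs_of_pos (by positivity)]
  nlinarith [hn.1]

lemma bisects_of_abs_discrepancy_le {S X : Set ℕ} (hX : X.Infinite) {C : ℝ}
    (h : ∀ n, |discrepancy S X n| ≤ C) : Bisects S X := by
  have ht : Tendsto (fun n => ((X ∩ Set.Iio n).ncard : ℝ)) atTop atTop :=
    tendsto_natCast_atTop_atTop.comp (tendsto_ncard_inter_Iio hX)
  have hC : Tendsto (fun n => C / (2 * (X ∩ Set.Iio n).ncard)) atTop (𝓝 0) :=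
    tendsto_const_nhds.div_atTop (ht.const_mul_atTop two_pos)
  refine tendsto_sub_nhds_zero_iff.mp (squeeze_zero_norm' ?_ hC)
  filter_upwards [ht.eventually_gt_atTop 0] with n hn
  have hdiff : ((S ∩ X ∩ Set.Iio n).ncard : ℝ) / (X ∩ Set.Iio n).ncard - 1 / 2
      = discrepancy S X n / (2 * (X ∩ Set.Iio n).ncard) := by
    rw [discrepancy_eq]; field_simp
  rw [hdiff, norm_div, Real.norm_eq_abs, Real.norm_of_nonneg (by positivity)]
  exact div_le_div_of_nonneg_right (h n) (by positivity)

section Alternating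

variable {α : Type*} [DecidableEq α]

/-- Within every fibre of `τ`, the elements alternately belong and do not belong to the set. -/
def alternating (τ : ℕ → α) : Set ℕ := {i | Even (Nat.count (τ · = τ i) i)}

lemma sum_sgn_alternating_fiber (τ : ℕ → α) (v : α) (n : ℕ) :
    ∑ i ∈ range n with τ i = v, sgn (alternating τ) i
      = if Even (Nat.count (τ · = v) n) then 0 else 1 := by
  induction n with
  | zero => simp
  | succ n ih =>
    rw [sum_filter, sum_range_succ, ← sum_filter, ih, Nat.count_succ]
    by_cases hn : τ n = v
    · subst hn
      by_cases he : Even (Nat.count (τ · = τ n) n) <;>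
        simp [he, sgn, alternating, Nat.even_add_one]
    · simp [hn]

lemma abs_discrepancy_alternating_le (τ : ℕ → α) {t : Finset α} (ht : ∀ i, τ i ∈ t)
    (V : Set α) (n : ℕ) : |discrepancy (alternating τ) (τ ⁻¹' V) n| ≤ t.card := by
  classical
  have hfiber : ∀ v ∈ t, ∑ i ∈ range n with τ i = v, (τ ⁻¹' V).indicator (sgn (alternating τ)) i
      = V.indicator (fun v => ∑ i ∈ range n with τ i = v, sgn (alternating τ) i) v := by
    intro v _
    by_cases hv : v ∈ V
    · rw [Set.indicator_of_mem hv]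
      refine sum_congr rfl fun i hi => Set.indicator_of_mem ?_ _
      simpa [(mem_filter.mp hi).2] using hv
    · rw [Set.indicator_of_notMem hv]
      refine sum_eq_zero fun i hi => Set.indicator_of_notMem ?_ _
      simpa [(mem_filter.mp hi).2] using hv
  rw [discrepancy, ← sum_fiberwise_of_maps_to (fun i _ => ht i), sum_congr rfl hfiber]
  refine (abs_sum_le_sum_abs _ _).trans ?_
  refine (sum_le_card_nsmul t _ 1 fun v _ => ?_).trans_eq (by simp)
  rw [Set.indicator_apply, sum_sgn_alternating_fiber]
  split_ifs <;> norm_num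

end Alternating

theorem _root_.Set.Finite.exists_bisects {F : Set (Set ℕ)} (hF : F.Finite)
    (hinf : ∀ X ∈ F, X.Infinite) : ∃ S, ∀ X ∈ F, Bisects S X := by
  classical
  let τ : ℕ → Finset (Set ℕ) := fun i => hF.toFinset.filter (i ∈ ·)
  refine ⟨alternating τ, fun X hX => ?_⟩
  have hXτ : τ ⁻¹' {v | X ∈ v} = X := by ext i; simp [τ, hX]
  have hXinf := hinf X hX
  rw [← hXτ] at hXinf ⊢
  exact bisects_of_abs_discrepancy_le hXinf fun n =>
    abs_discrepancy_alternating_le τ (t := hF.toFinset.powerset) (fun i => by simp [τ]) _ n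

lemma exists_eventually_le_of_finite_or_lt_frakB {F : Set (ℕ → ℕ)} (h : F.Finite ∨ #F < frakB) :
    ∃ g : ℕ → ℕ, ∀ f ∈ F, ∀ᶠ n in atTop, f n ≤ g n := by
  rcases h with hF | hF
  · obtain ⟨g, hg⟩ := hF.bddAbove
    exact ⟨g, fun f hf => Eventually.of_forall (hg hf)⟩
  · by_contra hno
    exact hF.not_ge (csInf_le' ⟨F, hno, rfl⟩)

lemma exists_bisects_of_finite_or_lt_rHalf {F : Set (Set ℕ)} (hinf : ∀ X ∈ F, X.Infinite)
    (h : F.Finite ∨ #F < rHalf) : ∃ S, ∀ X ∈ F, Bisects S X := by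
  rcases h with hF | hF
  · exact hF.exists_bisects hinf
  · by_contra hno
    exact hF.not_ge (csInf_le' ⟨F, hinf, hno, rfl⟩)

lemma finite_or_mk_insert_lt {α : Type*} {s t : Set α} (hst : s ⊆ t) (a : α) {c : Cardinal}
    (h : #t < c) : (insert a s).Finite ∨ #(insert a s : Set α) < c := by
  rcases s.finite_or_infinite with hs | hs
  · exact .inl (hs.insert a)
  · refine .inr (mk_insert_le.trans_lt ?_)
    rw [add_one_eq (infinite_iff.mp hs.to_subtype)]
    exact (mk_le_mk_of_subset hst).trans_lt h

section Blocks

variable {φ : ℕ → ℕ}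

/-- The `k` with `i ∈ [φ k, φ (k + 1))`, for strictly monotone `φ` and `φ 0 ≤ i`. -/
def blockIndex (φ : ℕ → ℕ) (i : ℕ) : ℕ := Nat.findGreatest (φ · ≤ i) i

lemma blockIndex_eq (hφ : StrictMono φ) {k i : ℕ} (hk : φ k ≤ i) (hi : i < φ (k + 1)) :
    blockIndex φ i = k :=
  Nat.findGreatest_eq_iff.mpr ⟨(hφ.id_le k).trans hk, fun _ => hk,
    fun _ hkm _ hm => hi.not_ge ((hφ.monotone hkm).trans hm)⟩

lemma mem_block_blockIndex (hφ : StrictMono φ) {i : ℕ} (hi : φ 0 ≤ i) :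
    φ (blockIndex φ i) ≤ i ∧ i < φ (blockIndex φ i + 1) := by
  refine ⟨Nat.findGreatest_spec (P := (φ · ≤ i)) (Nat.zero_le i) hi, not_le.mp fun h => ?_⟩
  exact Nat.findGreatest_is_greatest (lt_add_one _) ((hφ.id_le _).trans h) h

lemma tendsto_blockIndex (hφ : StrictMono φ) : Tendsto (blockIndex φ) atTop atTop :=
  tendsto_atTop_atTop.mpr fun k =>
    ⟨φ k, fun _ hi => Nat.le_findGreatest ((hφ.id_le k).trans hi) hi⟩

noncomputable def blockDamped (φ : ℕ → ℕ) (s : ℕ → ℝ) (i : ℕ) : ℝ :=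
  s i / φ (blockIndex φ i + 1)

lemma sum_Ico_blockDamped (hφ : StrictMono φ) (s : ℕ → ℝ) {k m n : ℕ} (hm : φ k ≤ m)
    (hn : n ≤ φ (k + 1)) :
    ∑ i ∈ Ico m n, blockDamped φ s i = (∑ i ∈ Ico m n, s i) / φ (k + 1) := by
  rw [sum_div]
  refine sum_congr rfl fun i hi => ?_
  rw [mem_Ico] at hi
  rw [blockDamped, blockIndex_eq hφ (hm.trans hi.1) (hi.2.trans_le hn)]

lemma indicator_blockDamped (X : Set ℕ) (φ : ℕ → ℕ) (s : ℕ → ℝ) :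
    X.indicator (blockDamped φ s) = blockDamped φ (X.indicator s) := by
  ext i
  by_cases hi : i ∈ X <;> simp [blockDamped, hi]

lemma abs_blockDamped (φ : ℕ → ℕ) (s : ℕ → ℝ) (i : ℕ) :
    |blockDamped φ s i| = blockDamped φ (|s ·|) i := by
  rw [blockDamped, blockDamped, abs_div, Nat.abs_cast]

lemma exists_tendsto_of_dist_block_le {E : Type*} [PseudoMetricSpace E] [CompleteSpace E]
    (hφ : StrictMono φ) {A : ℕ → E} {δ : ℕ → ℝ} (hδ : Summable δ)
    (h : ∀ᶠ k in atTop, ∀ n, φ k ≤ n → n ≤ φ (k + 1) → dist (A n) (A (φ k)) ≤ δ k) :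
    ∃ l, Tendsto A atTop (𝓝 l) := by
  have hcauchy : CauchySeq (A ∘ φ) := by
    refine cauchySeq_of_summable_dist (hδ.of_norm_bounded_eventually_nat ?_)
    filter_upwards [h] with k hk
    rw [Real.norm_of_nonneg dist_nonneg, dist_comm]
    exact hk _ (hφ (lt_add_one k)).le le_rfl
  obtain ⟨l, hl⟩ := cauchySeq_tendsto_of_complete hcauchy
  have hβ := tendsto_blockIndex hφ
  have hbound : Tendsto (fun n => δ (blockIndex φ n) + dist (A (φ (blockIndex φ n))) l)
      atTop (𝓝 0) := by
    simpa using (hδ.tendsto_atTop_zero.comp hβ).add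
      (tendsto_iff_dist_tendsto_zero.mp (hl.comp hβ))
  refine ⟨l, tendsto_iff_dist_tendsto_zero.mpr
    (squeeze_zero' (.of_forall fun _ => dist_nonneg) ?_ hbound)⟩
  filter_upwards [hβ.eventually h, eventually_ge_atTop (φ 0)] with n hn h0
  obtain ⟨hlo, hhi⟩ := mem_block_blockIndex hφ h0
  exact (dist_triangle _ _ _).trans (add_le_add_left (hn n hlo hhi.le) _)

lemma exists_tendsto_sum_blockDamped (hφ : StrictMono φ) {s : ℕ → ℝ}
    (hs : ∀ᶠ k in atTop, ∀ n, φ k ≤ n → |∑ i ∈ range n, s i| ≤ (1 / 2) ^ k * n) :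
    ∃ l, Tendsto (fun N => ∑ i ∈ range N, blockDamped φ s i) atTop (𝓝 l) := by
  refine exists_tendsto_of_dist_block_le hφ (summable_geometric_two.mul_left 2) ?_
  filter_upwards [hs] with k hk n hkn hn
  have hpos : (0 : ℝ) < φ (k + 1) := Nat.cast_pos.mpr ((Nat.zero_le _).trans_lt (hφ (lt_add_one k)))
  have hmono : (φ k : ℝ) ≤ φ (k + 1) := Nat.cast_le.mpr (hφ (lt_add_one k)).le
  rw [Real.dist_eq, ← sum_Ico_eq_sub _ hkn, sum_Ico_blockDamped hφ s le_rfl hn,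
    sum_Ico_eq_sub _ hkn, abs_div, Nat.abs_cast, div_le_iff₀ hpos]
  have hn' : (n : ℝ) ≤ φ (k + 1) := Nat.cast_le.mpr hn
  calc |∑ i ∈ range n, s i - ∑ i ∈ range (φ k), s i|
      ≤ |∑ i ∈ range n, s i| + |∑ i ∈ range (φ k), s i| := abs_sub _ _
    _ ≤ (1 / 2) ^ k * n + (1 / 2) ^ k * φ k := add_le_add (hk n hkn) (hk _ le_rfl)
    _ ≤ 2 * (1 / 2) ^ k * φ (k + 1) := by nlinarith [pow_pos (one_half_pos (α := ℝ)) k]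

end Blocks

lemma CondConv.not_exists_tendsto_sum_indicator_pos {r : ℕ → ℝ} (hr : CondConv r) :
    ¬ ∃ l, Tendsto (fun N => ∑ i ∈ range N, {i | 0 < r i}.indicator r i) atTop (𝓝 l) := by
  obtain ⟨⟨l, hl⟩, hns⟩ := hr
  rintro ⟨l', hl'⟩
  have habs : Tendsto (fun N => ∑ i ∈ range N, |r i|) atTop atTop :=
    (not_summable_iff_tendsto_nat_atTop_of_nonneg fun _ => abs_nonneg _).mp hns
  have hpos : ∀ i, {i | 0 < r i}.indicator r i = (r i + |r i|) / 2 := fun i => by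
    by_cases h : 0 < r i
    · rw [Set.indicator_of_mem (show i ∈ {i | 0 < r i} from h), abs_of_pos h]; ring
    · rw [Set.indicator_of_notMem (show i ∉ {i | 0 < r i} from h), abs_of_nonpos (not_lt.mp h)]
      ring
  simp only [hpos, ← sum_div, Finset.sum_add_distrib] at hl'
  exact not_tendsto_atTop_of_tendsto_nhds hl' ((hl.add_atTop habs).atTop_div_const two_pos)

lemma _root_.Set.Finite.exists_tendsto_sum_indicator {I : Set ℕ} (hI : I.Finite) (r : ℕ → ℝ) :
    ∃ l, Tendsto (fun N => ∑ i ∈ range N, I.indicator r i) atTop (𝓝 l) :=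
  ⟨_, (hasSum_sum_of_ne_finset_zero (s := hI.toFinset) fun _ hi =>
    Set.indicator_of_notMem (by simpa using hi) r).tendsto_sum_nat⟩

lemma not_summable_abs_blockDamped {φ : ℕ → ℕ} (hφ : StrictMono φ)
    (hφ2 : ∀ k, 2 * φ k ≤ φ (k + 1)) {s : ℕ → ℝ} (hs : ∀ i, |s i| = 1) :
    ¬ Summable (fun i => |blockDamped φ s i|) := by
  have hblock : ∀ k, (1 : ℝ) / 2 ≤ ∑ i ∈ Ico (φ k) (φ (k + 1)), |blockDamped φ s i| := by
    intro k
    have hpos : (0 : ℝ) < φ (k + 1) :=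
      Nat.cast_pos.mpr ((Nat.zero_le _).trans_lt (hφ (lt_add_one k)))
    have h2 : 2 * (φ k : ℝ) ≤ φ (k + 1) := by exact_mod_cast hφ2 k
    simp only [abs_blockDamped, hs]
    rw [sum_Ico_blockDamped hφ _ le_rfl le_rfl, Finset.sum_const, Nat.card_Ico, nsmul_one,
      Nat.cast_sub (hφ (lt_add_one k)).le, le_div_iff₀ hpos]
    linarith
  have hpartial : ∀ K : ℕ, (K : ℝ) / 2 ≤ ∑ i ∈ range (φ K), |blockDamped φ s i| := by
    intro K
    induction K with
    | zero => simpa using sum_nonneg fun i _ => abs_nonneg (blockDamped φ s i)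
    | succ K ih =>
      rw [← sum_range_add_sum_Ico _ (hφ (lt_add_one K)).le]
      push_cast
      linarith [hblock K]
  intro hsum
  obtain ⟨K, hK⟩ := exists_nat_gt (2 * ∑' i, |blockDamped φ s i|)
  linarith [hpartial K, hsum.sum_le_tsum (range (φ K)) fun i _ => abs_nonneg _]

lemma exists_strictMono_doubling_ge (g : ℕ → ℕ) :
    ∃ φ : ℕ → ℕ, StrictMono φ ∧ (∀ k, 2 * φ k ≤ φ (k + 1)) ∧ ∀ k, g k ≤ φ k := by
  set G : ℕ → ℕ := fun k => ∑ j ∈ range (k + 1), g j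
  have hG : ∀ k, G k ≤ G (k + 1) := fun k => sum_le_sum_of_subset (range_subset_range.mpr (by omega))
  have hdouble : ∀ k, 2 * (2 ^ k * (G k + 1)) ≤ 2 ^ (k + 1) * (G (k + 1) + 1) := fun k => by
    rw [pow_succ, mul_comm (2 ^ k) 2, mul_assoc]
    exact Nat.mul_le_mul_left _ (Nat.mul_le_mul_left _ (by have := hG k; omega))
  refine ⟨fun k => 2 ^ k * (G k + 1), strictMono_nat_of_lt_succ fun k => ?_, hdouble, fun k => ?_⟩
  · have := hdouble k
    have : 0 < 2 ^ k * (G k + 1) := by positivity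
    omega
  · calc g k ≤ G k := single_le_sum (fun _ _ => Nat.zero_le _) (mem_range.mpr (lt_add_one k))
      _ ≤ 2 ^ k * (G k + 1) := by nlinarith [Nat.one_le_two_pow (n := k)]

end SubseriesNumber

open SubseriesNumber Finset Topology in
/-- `min(𝔟, 𝔯_{1/2}) ≤ ß`. -/
theorem min_b_rHalf_le_ss : min frakB rHalf ≤ ssNum := by
  refine le_csInf ⟨_, Set.univ, fun r hr => ⟨_, trivial, hr.not_exists_tendsto_sum_indicator_pos⟩,
    rfl⟩ ?_
  rintro _ ⟨𝓘, h𝓘, rfl⟩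
  by_contra! hlt
  obtain ⟨hb, hrh⟩ := lt_min_iff.mp hlt
  set F := insert Set.univ {I ∈ 𝓘 | I.Infinite}
  have hFinf : ∀ X ∈ F, X.Infinite := by
    rintro X (rfl | ⟨-, hX⟩)
    exacts [Set.infinite_univ, hX]
  have hsmall : ∀ {c}, #𝓘 < c → F.Finite ∨ #F < c :=
    finite_or_mk_insert_lt (fun _ hI => hI.1) _
  obtain ⟨S, hS⟩ := exists_bisects_of_finite_or_lt_rHalf hFinf (hsmall hrh)
  choose! rate hrate using fun X hX k => eventually_atTop.mp
    ((hS X hX).discrepancy_isLittleO.bound (c := (1 / 2) ^ k) (by positivity))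
  obtain ⟨g, hg⟩ := exists_eventually_le_of_finite_or_lt_frakB
    ((hsmall hb).imp (·.image rate) (mk_image_le.trans_lt ·))
  obtain ⟨φ, hφ, hφ2, hgφ⟩ := exists_strictMono_doubling_ge g
  have hconv : ∀ X ∈ F, ∃ l, Tendsto (fun N => ∑ i ∈ range N,
      X.indicator (blockDamped φ (sgn S)) i) atTop (𝓝 l) := by
    intro X hX
    rw [indicator_blockDamped]
    refine exists_tendsto_sum_blockDamped hφ ?_
    filter_upwards [hg _ (Set.mem_image_of_mem rate hX)] with k hk n hn
    simpa [discrepancy] using hrate X hX k n (hk.trans ((hgφ k).trans hn))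
  have hcc : CondConv (blockDamped φ (sgn S)) :=
    ⟨by simpa using hconv _ (Set.mem_insert _ _), not_summable_abs_blockDamped hφ hφ2 (abs_sgn S)⟩
  obtain ⟨I, hI, hdiv⟩ := h𝓘 _ hcc
  rcases I.finite_or_infinite with hfin | hinf
  exacts [hdiv (hfin.exists_tendsto_sum_indicator _), hdiv (hconv I (.inr ⟨hI, hinf⟩))]
end

section
/- The statistically reaping number 𝔯_* is at most the covering number of the strong measure zero ideal, cov(𝒮𝒩). -/
open Filter Cardinal

/-- `S ⊆ ℕ` is moderate: its relative density stays bounded away from `0`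
and `1`. -/
def Moderate (S : Set ℕ) : Prop :=
  0 < Filter.liminf (fun n : ℕ => ((S ∩ Set.Iio n).ncard : ℝ) / n) atTop ∧
  Filter.limsup (fun n : ℕ => ((S ∩ Set.Iio n).ncard : ℝ) / n) atTop < 1

/-- The statistical density ratio `n·|S∩X∩n| / (|S∩n|·|X∩n|)`. -/
noncomputable def statRatio (S X : Set ℕ) (n : ℕ) : ℝ :=
  (n * (S ∩ X ∩ Set.Iio n).ncard : ℝ) /
    ((S ∩ Set.Iio n).ncard * (X ∩ Set.Iio n).ncard)

/-- The statistically reaping (refining) number `𝔯_*`: the least size of a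
family `F` of infinite subsets of ℕ such that no moderate infinite `S`
statistically refines every member of `F`. -/
noncomputable def rStar : Cardinal :=
  sInf {c : Cardinal | ∃ F : Set (Set ℕ), (∀ X ∈ F, X.Infinite) ∧
    (¬ ∃ S : Set ℕ, S.Infinite ∧ Moderate S ∧
      ∀ X ∈ F, Tendsto (statRatio S X) atTop (nhds 1)) ∧ #F = c}

/-- `Z ⊆ ℝ` has strong measure zero: for every sequence of positive reals
`ε` there are open intervals of length at most `ε n` covering `Z`. -/
def HasSMZ (Z : Set ℝ) : Prop :=
  ∀ ε : ℕ → ℝ, (∀ n, 0 < ε n) → ∃ a b : ℕ → ℝ,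
    (∀ n, b n - a n ≤ ε n) ∧ Z ⊆ ⋃ n, Set.Ioo (a n) (b n)

/-- `cov(𝒮𝒩)`: the least number of strong measure zero sets covering ℝ. -/
noncomputable def covSMZ : Cardinal :=
  sInf {c : Cardinal | ∃ C : Set (Set ℝ), (∀ Z ∈ C, HasSMZ Z) ∧
    ⋃₀ C = Set.univ ∧ #C = c}

/-!
Let `enc : Set ℕ → ℝ` be a continuous injection of the Cantor space; by compactness, sets whose
codes are close enough agree below any prescribed bound. A strong measure zero set `Z` can be
covered by intervals so short that all codes in the `k`-th interval share one initial segment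
`σ k` below `(k+1)!`, every code in `Z` lying in infinitely many of the intervals. On the block
`[k!, (k+1)!)` choose a set `Y k` of at least half its size that lies inside or outside `σ k`, and
put `X = ⋃ Y k`. Below `(k+1)!` the set `X` is `Y k` up to a fraction `2/k`, so when `S` agrees
with `σ k` there, `S` contains or misses `Y k` and `statRatio S X (k+1)!` is about `≥ 1/b` or
`≤ 2/(k a)`, where `a ≤ |S ∩ n|/n ≤ b < 1`. So no moderate `S` coded in `Z` refines `X`, and a
cover of `ℝ` by `cov(𝒮𝒩)` strong measure zero sets yields a family of that size witnessing `𝔯_*`.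
-/

open Set Topology
open scoped Nat

theorem exists_pos_forall_dist_lt_imp_eq {α E D : Type*} [TopologicalSpace α] [CompactSpace α]
    [MetricSpace E] [TopologicalSpace D] [DiscreteTopology D] {f : α → E} (hf : Continuous f)
    (hinj : Function.Injective f) {π : α → D} (hπ : Continuous π) :
    ∃ δ > 0, ∀ x y, dist (f x) (f y) < δ → π x = π y := by
  set K : Set (α × α) := {p | π p.1 ≠ π p.2}
  have hK : IsCompact K :=
    ((isClosed_discrete {q : D × D | q.1 ≠ q.2}).preimage (hπ.prodMap hπ)).isCompact
  have hpos : ∀ p ∈ K, 0 < dist (f p.1) (f p.2) := fun p hp =>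
    dist_pos.2 (hinj.ne fun h => hp (congrArg π h))
  obtain ⟨δ, hδ, hδK⟩ := hK.exists_forall_le' (by fun_prop) hpos
  exact ⟨δ, hδ, fun x y hxy => by_contra fun hne => (hδK (x, y) hne).not_gt hxy⟩

def SeparatesInitialSegments (enc : Set ℕ → ℝ) : Prop :=
  ∀ n, ∃ δ > 0, ∀ S T, dist (enc S) (enc T) < δ → S ∩ Iio n = T ∩ Iio n

theorem exists_separatesInitialSegments : ∃ enc, SeparatesInitialSegments enc := by
  classical
  obtain ⟨f, -, hf, hinj⟩ :=
    (PerfectSpace.univ_perfect (α := ℝ)).exists_nat_bool_injection univ_nonempty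
  refine ⟨fun S => f fun i => decide (i ∈ S), fun n => ?_⟩
  obtain ⟨δ, hδ, hsep⟩ := exists_pos_forall_dist_lt_imp_eq hf hinj
    (π := fun x (i : Fin n) => x i) (by fun_prop)
  refine ⟨δ, hδ, fun S T hST => ?_⟩
  ext i
  simp only [mem_inter_iff, mem_Iio, and_congr_left_iff]
  intro hi
  simpa using congrFun (hsep _ _ hST) ⟨i, hi⟩

theorem HasSMZ.exists_frequently_mem {Z : Set ℝ} (hZ : HasSMZ Z) {ε : ℕ → ℝ}
    (hε : ∀ k, 0 < ε k) : ∃ a b : ℕ → ℝ, (∀ k, b k - a k ≤ ε k) ∧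
      ∀ x ∈ Z, ∃ᶠ k in atTop, x ∈ Ioo (a k) (b k) := by
  choose A B hAB hcov using fun p => hZ (fun m => ε (Nat.pair p m)) (fun m => hε _)
  refine ⟨fun k => A k.unpair.1 k.unpair.2, fun k => B k.unpair.1 k.unpair.2,
    fun k => by simpa using hAB k.unpair.1 k.unpair.2,
    fun x hx => frequently_atTop.2 fun p => ?_⟩
  obtain ⟨m, hm⟩ := mem_iUnion.1 (hcov p hx)
  exact ⟨Nat.pair p m, Nat.left_le_pair p m, by simpa using hm⟩

theorem HasSMZ.exists_frequently_inter_Iio_eq {enc : Set ℕ → ℝ}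
    (henc : SeparatesInitialSegments enc) {Z : Set ℝ} (hZ : HasSMZ Z) (N : ℕ → ℕ) :
    ∃ σ : ℕ → Set ℕ, ∀ S, enc S ∈ Z →
      ∃ᶠ k in atTop, S ∩ Iio (N k) = σ k ∩ Iio (N k) := by
  choose δ hδ hsep using fun k => henc (N k)
  obtain ⟨a, b, hab, hfreq⟩ := hZ.exists_frequently_mem hδ
  refine ⟨fun k => Classical.epsilon fun T => enc T ∈ Ioo (a k) (b k), fun S hS => ?_⟩
  refine (hfreq _ hS).mono fun k hk => hsep k _ _ ?_
  have hσ := Classical.epsilon_spec (p := fun T => enc T ∈ Ioo (a k) (b k)) ⟨S, hk⟩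
  rw [Real.dist_eq, abs_sub_lt_iff]
  constructor <;> linarith [hk.1, hk.2, hσ.1, hσ.2, hab k]

theorem Moderate.exists_bounds {S : Set ℕ} (hS : Moderate S) :
    ∃ a b : ℝ, 0 < a ∧ 0 < b ∧ b < 1 ∧ ∀ᶠ n : ℕ in atTop,
      a * n ≤ (S ∩ Iio n).ncard ∧ ((S ∩ Iio n).ncard : ℝ) ≤ b * n := by
  set d : ℕ → ℝ := fun n => ((S ∩ Iio n).ncard : ℝ) / n
  have hd0 : ∀ n, 0 ≤ d n := fun n => by positivity
  have hd1 : ∀ n, d n ≤ 1 := fun n => div_le_one_of_le₀ (by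
    exact_mod_cast (ncard_le_ncard inter_subset_right (finite_Iio n)).trans (ncard_Iio_nat n).le)
    n.cast_nonneg
  obtain ⟨b, hb, hb1⟩ := exists_between (max_lt hS.2 one_half_lt_one)
  refine ⟨liminf d atTop / 2, b, half_pos hS.1,
    (one_half_pos.trans_le (le_max_right _ _)).trans hb, hb1, ?_⟩
  filter_upwards [eventually_lt_of_lt_liminf (half_lt_self hS.1) (isBoundedUnder_of ⟨0, hd0⟩),
    eventually_lt_of_limsup_lt ((le_max_left _ _).trans_lt hb) (isBoundedUnder_of ⟨1, hd1⟩),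
    eventually_gt_atTop 0] with n hlo hhi hn
  have hn' : (0 : ℝ) < n := by exact_mod_cast hn
  exact ⟨(le_div_iff₀ hn').1 hlo.le, (div_le_iff₀ hn').1 hhi.le⟩

theorem div_le_statRatio {S X : Set ℕ} {n : ℕ} {b ρ : ℝ} (hb : 0 < b)
    (hS : 0 < (S ∩ Iio n).ncard) (hSb : ((S ∩ Iio n).ncard : ℝ) ≤ b * n)
    (hX : 0 < (X ∩ Iio n).ncard)
    (hSX : (1 - ρ) * (X ∩ Iio n).ncard ≤ (S ∩ X ∩ Iio n).ncard) :
    (1 - ρ) / b ≤ statRatio S X n := by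
  unfold statRatio
  rw [div_le_div_iff₀ hb (by positivity)]
  have hs : (0 : ℝ) < (S ∩ Iio n).ncard := by exact_mod_cast hS
  have hx : (0 : ℝ) < (X ∩ Iio n).ncard := by exact_mod_cast hX
  rcases le_or_gt ρ 1 with hρ | hρ
  · nlinarith [mul_le_mul_of_nonneg_left hSb (mul_nonneg (sub_nonneg.2 hρ) hx.le)]
  · nlinarith [mul_pos hs hx, (Nat.cast_nonneg (S ∩ X ∩ Iio n).ncard : (0 : ℝ) ≤ _)]

theorem statRatio_le_div {S X : Set ℕ} {n : ℕ} {a ρ : ℝ} (ha : 0 < a)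
    (hS : 0 < (S ∩ Iio n).ncard) (hSa : a * n ≤ (S ∩ Iio n).ncard)
    (hX : 0 < (X ∩ Iio n).ncard)
    (hSX : ((S ∩ X ∩ Iio n).ncard : ℝ) ≤ ρ * (X ∩ Iio n).ncard) :
    statRatio S X n ≤ ρ / a := by
  unfold statRatio
  rw [div_le_div_iff₀ (by positivity) ha]
  have hx : (0 : ℝ) < (X ∩ Iio n).ncard := by exact_mod_cast hX
  nlinarith [mul_le_mul_of_nonneg_right hSa hx.le,
    (Nat.cast_nonneg (S ∩ X ∩ Iio n).ncard : (0 : ℝ) ≤ _)]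

theorem Finset.exists_subset_two_mul_card_ge {α : Type*} (I : Finset α) (P : Set α) :
    ∃ Y ⊆ I, I.card ≤ 2 * Y.card ∧ ((Y : Set α) ⊆ P ∨ Disjoint (Y : Set α) P) := by
  classical
  have hsplit := I.card_filter_add_card_filter_not (· ∈ P)
  by_cases h : I.card ≤ 2 * (I.filter (· ∈ P)).card
  · exact ⟨_, I.filter_subset _, h, Or.inl fun i hi => (Finset.mem_filter.1 hi).2⟩
  · refine ⟨I.filter (· ∉ P), I.filter_subset _, by omega, Or.inr ?_⟩
    exact Set.disjoint_left.2 fun i hi => (Finset.mem_filter.1 hi).2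

theorem subset_or_disjoint_of_inter_eq {α : Type*} {Y S T U : Set α} (hYU : Y ⊆ U)
    (hST : S ∩ U = T ∩ U) (hT : Y ⊆ T ∨ Disjoint Y T) : Y ⊆ S ∨ Disjoint Y S := by
  have hiff : ∀ i ∈ Y, i ∈ S ↔ i ∈ T := fun i hi => by
    simpa [hYU hi] using congrArg (i ∈ ·) hST
  refine hT.imp (fun h i hi => (hiff i hi).2 (h hi)) fun h => ?_
  exact Set.disjoint_left.2 fun i hi hiS => Set.disjoint_left.1 h hi ((hiff i hi).1 hiS)

theorem infinite_iUnion_of_subset_Ico_factorial {Y : ℕ → Finset ℕ}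
    (hY : ∀ k, Y k ⊆ Finset.Ico k ! (k + 1)!) (hcard : ∀ k, k * k ! ≤ 2 * (Y k).card) :
    (⋃ k, (Y k : Set ℕ)).Infinite := by
  refine infinite_of_forall_exists_gt fun m => ?_
  obtain ⟨i, hi⟩ : (Y (m + 1)).Nonempty := by
    rw [← Finset.card_pos]
    have := hcard (m + 1)
    have := Nat.factorial_pos (m + 1)
    nlinarith
  refine ⟨i, mem_iUnion.2 ⟨m + 1, hi⟩, ?_⟩
  have := (Finset.mem_Ico.1 (hY _ hi)).1
  have := Nat.self_le_factorial (m + 1)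
  omega

theorem ncard_iUnion_inter_Iio_sdiff_le {Y : ℕ → Finset ℕ}
    (hY : ∀ k, Y k ⊆ Finset.Ico k ! (k + 1)!) (hcard : ∀ k, k * k ! ≤ 2 * (Y k).card)
    {k : ℕ} (hk : 0 < k) :
    ((((⋃ j, (Y j : Set ℕ)) ∩ Iio (k + 1)!) \ Y k).ncard : ℝ) ≤
      2 / k * ((⋃ j, (Y j : Set ℕ)) ∩ Iio (k + 1)!).ncard := by
  set A := (⋃ j, (Y j : Set ℕ)) ∩ Iio (k + 1)!
  have hrest : A \ Y k ⊆ Iio k ! := by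
    rintro i ⟨⟨hiX, hin⟩, hik⟩
    obtain ⟨j, hij⟩ := mem_iUnion.1 hiX
    have hji := Finset.mem_Ico.1 (hY j hij)
    rcases lt_trichotomy j k with hjk | rfl | hkj
    · exact hji.2.trans_le (Nat.factorial_le hjk)
    · exact absurd hij hik
    · exact absurd hin (not_lt.2 ((Nat.factorial_le hkj).trans hji.1))
  have hrest' := (ncard_le_ncard hrest (finite_Iio _)).trans (ncard_Iio_nat _).le
  have hYA : (Y k).card ≤ A.ncard := by
    rw [← ncard_coe_finset]
    refine ncard_le_ncard (fun i hi => ⟨mem_iUnion.2 ⟨k, hi⟩, ?_⟩)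
      ((finite_Iio _).inter_of_right _)
    exact (Finset.mem_Ico.1 (hY k hi)).2
  rw [div_mul_eq_mul_div, le_div_iff₀ (by positivity)]
  have := hcard k
  exact_mod_cast (by nlinarith : (A \ Y k).ncard * k ≤ 2 * A.ncard)

theorem statRatio_factorial_ge_or_le {Y : ℕ → Finset ℕ}
    (hY : ∀ k, Y k ⊆ Finset.Ico k ! (k + 1)!) (hcard : ∀ k, k * k ! ≤ 2 * (Y k).card)
    {S : Set ℕ} {k : ℕ} (hk : 0 < k) {a b : ℝ} (ha : 0 < a) (hb : 0 < b)
    (hSa : a * (k + 1)! ≤ (S ∩ Iio (k + 1)!).ncard)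
    (hSb : ((S ∩ Iio (k + 1)!).ncard : ℝ) ≤ b * (k + 1)!)
    (hYS : (Y k : Set ℕ) ⊆ S ∨ Disjoint (Y k : Set ℕ) S) :
    (1 - 2 / k) / b ≤ statRatio S (⋃ j, (Y j : Set ℕ)) (k + 1)! ∨
      statRatio S (⋃ j, (Y j : Set ℕ)) (k + 1)! ≤ 2 / k / a := by
  set A := (⋃ j, (Y j : Set ℕ)) ∩ Iio (k + 1)!
  have hYA : (Y k : Set ℕ) ⊆ A := fun i hi =>
    ⟨mem_iUnion.2 ⟨k, hi⟩, (Finset.mem_Ico.1 (hY k hi)).2⟩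
  have hAfin : A.Finite := (finite_Iio _).inter_of_right _
  have hrest := ncard_iUnion_inter_Iio_sdiff_le hY hcard hk
  have hA : 0 < A.ncard := by
    have := ncard_coe_finset (Y k) ▸ ncard_le_ncard hYA hAfin
    have := Nat.factorial_pos k
    nlinarith [hcard k]
  have hS : 0 < (S ∩ Iio (k + 1)!).ncard := by
    have : (0 : ℝ) < (S ∩ Iio (k + 1)!).ncard := hSa.trans_lt' (by positivity)
    exact_mod_cast this
  rcases hYS with hsub | hdisj
  · refine Or.inl (div_le_statRatio hb hS hSb hA ?_)
    rw [inter_assoc]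
    have hsplit := ncard_coe_finset (Y k) ▸ ncard_sdiff_add_ncard_of_subset hYA hAfin
    have hYSA := ncard_coe_finset (Y k) ▸
      ncard_le_ncard (subset_inter hsub hYA) (hAfin.inter_of_right S)
    have : ((A \ Y k).ncard : ℝ) + (Y k).card = A.ncard := by exact_mod_cast hsplit
    have : ((Y k).card : ℝ) ≤ (S ∩ A).ncard := by exact_mod_cast hYSA
    linarith
  · refine Or.inr (statRatio_le_div ha hS hSa hA ?_)
    rw [inter_assoc]
    have : (S ∩ A).ncard ≤ (A \ Y k).ncard :=
      ncard_le_ncard (fun i ⟨hiS, hiA⟩ => ⟨hiA, fun hiY => disjoint_left.1 hdisj hiY hiS⟩)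
        hAfin.sdiff
    have : ((S ∩ A).ncard : ℝ) ≤ (A \ Y k).ncard := by exact_mod_cast this
    linarith

theorem exists_infinite_not_tendsto_statRatio (σ : ℕ → Set ℕ) :
    ∃ X : Set ℕ, X.Infinite ∧ ∀ S, Moderate S →
      (∃ᶠ k in atTop, S ∩ Iio (k + 1)! = σ k ∩ Iio (k + 1)!) →
      ¬ Tendsto (statRatio S X) atTop (𝓝 1) := by
  choose Y hY hYcard hYσ using
    fun k => (Finset.Ico k ! (k + 1)!).exists_subset_two_mul_card_ge (σ k)
  have hcard : ∀ k, k * k ! ≤ 2 * (Y k).card := fun k => by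
    simpa [Nat.factorial_succ, add_one_mul] using hYcard k
  refine ⟨⋃ k, (Y k : Set ℕ), infinite_iUnion_of_subset_Ico_factorial hY hcard,
    fun S hS hagree hlim => ?_⟩
  obtain ⟨a, b, ha, hb, hb1, hdens⟩ := hS.exists_bounds
  have hfac : Tendsto (fun k => (k + 1)!) atTop atTop :=
    tendsto_atTop_mono (fun k => Nat.self_le_factorial _) (tendsto_add_atTop_nat 1)
  have hρ : Tendsto (fun k : ℕ => 2 / (k : ℝ)) atTop (𝓝 0) :=
    tendsto_const_div_atTop_nhds_zero_nat 2
  have hlim_fac := hlim.comp hfac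
  have hup : ∀ᶠ k in atTop, statRatio S _ (k + 1)! < (1 - 2 / k) / b :=
    hlim_fac.eventually_lt ((tendsto_const_nhds.sub hρ).div_const b)
      (by simpa using (one_lt_inv₀ hb).2 hb1)
  have hlow : ∀ᶠ k in atTop, 2 / k / a < statRatio S _ (k + 1)! :=
    (hρ.div_const a).eventually_lt hlim_fac (by simp)
  obtain ⟨k, hSk, hupk, hlowk, hdensk, hk⟩ :=
    (hagree.and_eventually (hup.and (hlow.and ((hfac.eventually hdens).and
      (eventually_gt_atTop 0))))).exists
  have hYS := subset_or_disjoint_of_inter_eq (fun i hi => (Finset.mem_Ico.1 (hY k hi)).2) hSk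
    (hYσ k)
  rcases statRatio_factorial_ge_or_le hY hcard hk ha hb hdensk.1 hdensk.2 hYS with h | h
  · exact hupk.not_ge h
  · exact hlowk.not_ge h

theorem hasSMZ_singleton (x : ℝ) : HasSMZ {x} := fun ε hε =>
  ⟨fun n => x - ε n / 2, fun n => x + ε n / 2, fun n => by linarith,
    singleton_subset_iff.2 (mem_iUnion.2 ⟨0, by constructor <;> linarith [hε 0]⟩)⟩

/-- `𝔯_* ≤ cov(𝒮𝒩)`. -/
theorem rStar_le_covSMZ : rStar ≤ covSMZ := by
  obtain ⟨enc, henc⟩ := exists_separatesInitialSegments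
  refine le_csInf ⟨_, range ({·}), forall_mem_range.2 hasSMZ_singleton,
    eq_univ_of_forall fun x => ⟨{x}, mem_range_self x, rfl⟩, rfl⟩ ?_
  rintro _ ⟨C, hC, hCU, rfl⟩
  have hdefeat (Z : C) : ∃ X : Set ℕ, X.Infinite ∧
      ∀ S, Moderate S → enc S ∈ (Z : Set ℝ) → ¬ Tendsto (statRatio S X) atTop (𝓝 1) := by
    obtain ⟨σ, hσ⟩ := (hC Z Z.2).exists_frequently_inter_Iio_eq henc fun k => (k + 1)!
    obtain ⟨X, hXinf, hX⟩ := exists_infinite_not_tendsto_statRatio σ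
    exact ⟨X, hXinf, fun S hS hSZ => hX S hS (hσ S hSZ)⟩
  choose X hXinf hX using hdefeat
  unfold rStar
  refine le_trans (csInf_le' ?_) (mk_range_le (f := X))
  refine ⟨range X, forall_mem_range.2 hXinf, ?_, rfl⟩
  rintro ⟨S, -, hS, hlim⟩
  obtain ⟨Z, hZC, hSZ⟩ := mem_sUnion.1 (hCU ▸ mem_univ (enc S))
  exact hX ⟨Z, hZC⟩ S hS hSZ (hlim _ (mem_range_self _))
end

section
/- If Z is a strong measure zero subset of the Cantor space 2^ω, ⟨J_i⟩ is an interval partition of ω, and ⟨P_i⟩ is a family of pairwise disjoint infinite subsets of ω, then there is a sequence ⟨s_j⟩_{j<ω}, with s_j a function from ⋃_{i≤j} J_i to 2, such that for every natural number k and every x ∈ Z there exists j ∈ P_k with x restricted to ⋃_{i≤j} J_i equal to s_j. -/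
/-- `Z` is a strong measure zero subset of the Cantor space `2^ω`: for every
sequence of lengths `g : ℕ → ℕ` (corresponding to radii `2^{-g i}`, a ball of
radius `2^{-n}` being the set of sequences extending a fixed string of length
`n`) there is a sequence of strings `t i` of length `g i` such that every
`x ∈ Z` extends some `t i`. -/
def CantorSMZ (Z : Set (ℕ → Bool)) : Prop :=
  ∀ g : ℕ → ℕ, ∃ t : (i : ℕ) → (Fin (g i) → Bool),
    ∀ x ∈ Z, ∃ i, ∀ m : Fin (g i), x m = t i m

/-- If `Z ⊆ 2^ω` has strong measure zero, `⟨J_i⟩` is an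
interval partition of ℕ (with `J_i = [e i, e (i+1))`, so
`⋃_{i ≤ j} J_i = [0, e (j+1))`), and `⟨P_i⟩` is a family of pairwise disjoint
infinite subsets of ℕ, then there is a sequence `⟨s_j⟩` with
`s_j : ⋃_{i ≤ j} J_i → 2` such that for every `k` and every `x ∈ Z` there is
`j ∈ P_k` with `x ↾ ⋃_{i ≤ j} J_i = s_j`. -/
theorem smz_guessing (Z : Set (ℕ → Bool)) (hZ : CantorSMZ Z)
    (e : ℕ → ℕ) (he0 : e 0 = 0) (hmono : StrictMono e)
    (P : ℕ → Set ℕ) (hPinf : ∀ i, (P i).Infinite)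
    (hPdisj : ∀ i j, i ≠ j → Disjoint (P i) (P j)) :
    ∃ s : (j : ℕ) → (Fin (e (j + 1)) → Bool),
      ∀ k : ℕ, ∀ x ∈ Z, ∃ j ∈ P k, ∀ m : Fin (e (j + 1)), x m = s j m := by
  classical
  -- injective enumeration of each `P k`
  set J : ℕ → ℕ → ℕ := fun k i => (Set.Infinite.natEmbedding (P k) (hPinf k) i : ℕ) with hJ
  have hJmem : ∀ k i, J k i ∈ P k := fun k i =>
    (Set.Infinite.natEmbedding (P k) (hPinf k) i).2
  have hJinj : ∀ k, Function.Injective (J k) := by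
    intro k a b hab
    exact (Set.Infinite.natEmbedding (P k) (hPinf k)).injective (Subtype.ext hab)
  -- uniqueness of decoding
  have huniq : ∀ k i k' i', J k' i' = J k i → k' = k ∧ i' = i := by
    intro k i k' i' h
    have hk : k' = k := by
      by_contra hne
      exact Set.disjoint_left.1 (hPdisj k' k hne) (hJmem k' i') (h ▸ hJmem k i)
    subst hk
    exact ⟨rfl, hJinj k' h⟩
  -- apply SMZ for each k
  choose t ht using fun k => hZ (fun i => e (J k i + 1))
  refine ⟨fun j => if h : ∃ p : ℕ × ℕ, J p.1 p.2 = j then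
      (fun m => t h.choose.1 h.choose.2 (Fin.cast (by rw [h.choose_spec]) m))
    else fun _ => false, ?_⟩
  intro k x hx
  obtain ⟨i, hi⟩ := ht k x hx
  refine ⟨J k i, hJmem k i, ?_⟩
  intro m
  have hex : ∃ p : ℕ × ℕ, J p.1 p.2 = J k i := ⟨(k, i), rfl⟩
  beta_reduce
  rw [dif_pos hex]
  obtain ⟨hk, hi'⟩ := huniq k i hex.choose.1 hex.choose.2 hex.choose_spec
  have key : ∀ k' i', k' = k → i' = i →
      ∀ (h : e (J k i + 1) = e (J k' i' + 1)), x ↑m = t k' i' (Fin.cast h m) := by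
    rintro k' i' rfl rfl h
    have hc : Fin.cast h m = m := by ext; rfl
    rw [hc]; exact hi m
  exact key _ _ hk hi' _
end
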